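/- The normalized index siCor^(α)(X,Y) = siCov^(α)(X,Y) / ∫_{ℝ^p}(1−|φ_X(t)|²)(1−|φ_Y(t)|²)ρ_α(t)dt satisfies 0 ≤ siCor^(α)(X,Y) ≤ 1 whenever the denominator is positive. -/

import Mathlib

open MeasureTheory ProbabilityTheory Real

noncomputable def cConst (p : ℕ) (α : ℝ) : ℝ :=
  2 * Real.pi ^ ((p : ℝ) / 2) * Real.Gamma (1 - α / 2) /
    (α * 2 ^ α * Real.Gamma ((α + p) / 2))

/-- The weight function ρ_α(t) = c(p,α)⁻¹ |t|^{-α-p}. -/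
noncomputable def rhoWeight (p : ℕ) (α : ℝ) (t : EuclideanSpace ℝ (Fin p)) : ℝ :=
  (cConst p α)⁻¹ * ‖t‖ ^ (-α - (p : ℝ))

/-!
Pointwise in `t`, `φ_{X,Y}(t,t) - φ_X(t) φ_Y(t)` is the covariance of the unit-modulus random
variables `e^{i⟨t,X⟩}` and `e^{i⟨t,Y⟩}`, whose variances are `1 - |φ_X(t)|²` and `1 - |φ_Y(t)|²`.
Cauchy–Schwarz therefore bounds the numerator's integrand by the denominator's, and both are
nonnegative since `ρ_α ≥ 0` for `0 < α < 2`. Integrating gives `0 ≤ siCov ≤ denominator`; the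
numerator is integrable because it is dominated by the denominator, which is integrable since its
integral is nonzero, and measurable because characteristic functions are continuous.
-/

section Covariance

variable {Ω : Type*} [MeasurableSpace Ω] {μ : Measure Ω} {f g : Ω → ℂ}

lemma sq_norm_integral_mul_le (hf : MemLp f 2 μ) (hg : MemLp g 2 μ) :
    ‖∫ ω, f ω * g ω ∂μ‖ ^ 2 ≤ (∫ ω, ‖f ω‖ ^ 2 ∂μ) * ∫ ω, ‖g ω‖ ^ 2 ∂μ := by
  have holder : ∫ ω, ‖f ω‖ * ‖g ω‖ ∂μ
      ≤ √(∫ ω, ‖f ω‖ ^ 2 ∂μ) * √(∫ ω, ‖g ω‖ ^ 2 ∂μ) := by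
    simpa only [Real.rpow_two, ← Real.sqrt_eq_rpow] using
      integral_mul_norm_le_Lp_mul_Lq (μ := μ) .two_two (by simpa using hf) (by simpa using hg)
  have hnorm : ‖∫ ω, f ω * g ω ∂μ‖ ≤ ∫ ω, ‖f ω‖ * ‖g ω‖ ∂μ := by
    simpa only [norm_mul] using norm_integral_le_integral_norm (fun ω ↦ f ω * g ω)
  calc ‖∫ ω, f ω * g ω ∂μ‖ ^ 2
      ≤ (√(∫ ω, ‖f ω‖ ^ 2 ∂μ) * √(∫ ω, ‖g ω‖ ^ 2 ∂μ)) ^ 2 := by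
        gcongr; exact hnorm.trans holder
    _ = _ := by
        rw [mul_pow, Real.sq_sqrt (integral_nonneg fun _ ↦ by positivity),
          Real.sq_sqrt (integral_nonneg fun _ ↦ by positivity)]

variable [IsProbabilityMeasure μ]

lemma integral_norm_sub_integral_sq (hf : MemLp f 2 μ) :
    ∫ ω, ‖f ω - ∫ ω', f ω' ∂μ‖ ^ 2 ∂μ = ∫ ω, ‖f ω‖ ^ 2 ∂μ - ‖∫ ω, f ω ∂μ‖ ^ 2 := by
  set c := ∫ ω, f ω ∂μ
  have hfc : Integrable (fun ω ↦ f ω * (starRingEnd ℂ) c) μ :=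
    (hf.integrable one_le_two).mul_const _
  have hre : ∫ ω, (f ω * (starRingEnd ℂ) c).re ∂μ = ‖c‖ ^ 2 := by
    have h := integral_re hfc
    simp only [RCLike.re_to_complex] at h
    rw [h, integral_mul_const, Complex.mul_conj, Complex.normSq_eq_norm_sq]
    norm_cast
  have expand : ∀ ω,
      ‖f ω - c‖ ^ 2 = ‖f ω‖ ^ 2 + ‖c‖ ^ 2 - 2 * (f ω * (starRingEnd ℂ) c).re := fun ω ↦ by
    simp only [Complex.sq_norm, Complex.normSq_sub]
  have hf2 := hf.integrable_norm_pow two_ne_zero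
  have hf2c : Integrable (fun ω ↦ ‖f ω‖ ^ 2 + ‖c‖ ^ 2) μ := hf2.add (integrable_const _)
  have hre2 : Integrable (fun ω ↦ 2 * (f ω * (starRingEnd ℂ) c).re) μ := hfc.re.const_mul 2
  rw [integral_congr_ae (ae_of_all _ expand), integral_sub hf2c hre2,
    integral_add hf2 (integrable_const _), integral_const_mul, hre]
  simp only [integral_const, probReal_univ, smul_eq_mul, one_mul]
  ring

lemma integral_sub_mul_sub_integral (hf : MemLp f 2 μ) (hg : MemLp g 2 μ) :
    ∫ ω, (f ω - ∫ ω', f ω' ∂μ) * (g ω - ∫ ω', g ω' ∂μ) ∂μ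
      = ∫ ω, f ω * g ω ∂μ - (∫ ω, f ω ∂μ) * ∫ ω, g ω ∂μ := by
  set c := ∫ ω, f ω ∂μ
  set d := ∫ ω, g ω ∂μ
  have hf1 := hf.integrable one_le_two
  have hg1 := hg.integrable one_le_two
  have hfg : Integrable (fun ω ↦ f ω * g ω) μ := hf.integrable_mul hg
  have expand : ∀ ω, (f ω - c) * (g ω - d) = f ω * g ω - (d * f ω + c * (g ω - d)) :=
    fun ω ↦ by ring
  have hgd : Integrable (fun ω ↦ c * (g ω - d)) μ := (hg1.sub (integrable_const d)).const_mul c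
  have hfd : Integrable (fun ω ↦ d * f ω) μ := hf1.const_mul d
  have hsum : Integrable (fun ω ↦ d * f ω + c * (g ω - d)) μ := hfd.add hgd
  rw [integral_congr_ae (ae_of_all _ expand), integral_sub hfg hsum, integral_add hfd hgd,
    integral_const_mul, integral_const_mul, integral_sub hg1 (integrable_const d)]
  simp only [integral_const, probReal_univ, one_smul, sub_right_inj]
  ring

lemma sq_norm_integral_mul_sub_le (hf : MemLp f 2 μ) (hg : MemLp g 2 μ) :
    ‖∫ ω, f ω * g ω ∂μ - (∫ ω, f ω ∂μ) * ∫ ω, g ω ∂μ‖ ^ 2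
      ≤ (∫ ω, ‖f ω‖ ^ 2 ∂μ - ‖∫ ω, f ω ∂μ‖ ^ 2) *
          (∫ ω, ‖g ω‖ ^ 2 ∂μ - ‖∫ ω, g ω ∂μ‖ ^ 2) := by
  rw [← integral_sub_mul_sub_integral hf hg, ← integral_norm_sub_integral_sq hf,
    ← integral_norm_sub_integral_sq hg]
  exact sq_norm_integral_mul_le (hf.sub (memLp_const _)) (hg.sub (memLp_const _))

lemma sq_norm_integral_mul_sub_le_of_norm_eq_one (hf : AEStronglyMeasurable f μ)
    (hg : AEStronglyMeasurable g μ) (hf1 : ∀ ω, ‖f ω‖ = 1) (hg1 : ∀ ω, ‖g ω‖ = 1) :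
    ‖∫ ω, f ω * g ω ∂μ - (∫ ω, f ω ∂μ) * ∫ ω, g ω ∂μ‖ ^ 2
      ≤ (1 - ‖∫ ω, f ω ∂μ‖ ^ 2) * (1 - ‖∫ ω, g ω ∂μ‖ ^ 2) := by
  simpa [hf1, hg1] using sq_norm_integral_mul_sub_le
    (.of_bound hf 1 (ae_of_all _ fun ω ↦ (hf1 ω).le))
    (.of_bound hg 1 (ae_of_all _ fun ω ↦ (hg1 ω).le))

lemma sq_norm_integral_exp_add_sub_le {U V : Ω → ℝ} (hU : AEMeasurable U μ)
    (hV : AEMeasurable V μ) :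
    ‖∫ ω, Complex.exp (Complex.I * ((U ω + V ω : ℝ) : ℂ)) ∂μ -
        (∫ ω, Complex.exp (Complex.I * (U ω : ℂ)) ∂μ) *
          ∫ ω, Complex.exp (Complex.I * (V ω : ℂ)) ∂μ‖ ^ 2
      ≤ (1 - ‖∫ ω, Complex.exp (Complex.I * (U ω : ℂ)) ∂μ‖ ^ 2)
        * (1 - ‖∫ ω, Complex.exp (Complex.I * (V ω : ℂ)) ∂μ‖ ^ 2) := by
  simp only [Complex.ofReal_add, mul_add, Complex.exp_add]
  exact sq_norm_integral_mul_sub_le_of_norm_eq_one (by fun_prop) (by fun_prop)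
    (fun ω ↦ Complex.norm_exp_I_mul_ofReal _) (fun ω ↦ Complex.norm_exp_I_mul_ofReal _)

end Covariance

lemma continuous_integral_exp_I_mul_inner {Ω E : Type*} [MeasurableSpace Ω] {μ : Measure Ω}
    [IsFiniteMeasure μ] [NormedAddCommGroup E] [InnerProductSpace ℝ E] [MeasurableSpace E]
    [BorelSpace E] [SecondCountableTopology E] {X : Ω → E} (hX : AEMeasurable X μ) :
    Continuous fun t ↦ ∫ ω, Complex.exp (Complex.I * (inner ℝ t (X ω) : ℂ)) ∂μ := by
  have : (fun t ↦ ∫ ω, Complex.exp (Complex.I * (inner ℝ t (X ω) : ℂ)) ∂μ) =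
      charFun (μ.map X) := by
    ext t
    rw [charFun_apply, integral_map hX (by fun_prop)]
    simp only [real_inner_comm, mul_comm]
  exact this ▸ continuous_charFun

lemma integral_div_integral_mem_Icc {α : Type*} [MeasurableSpace α] {μ : Measure α}
    {f g : α → ℝ}
    (hf : AEStronglyMeasurable f μ) (hf0 : ∀ x, 0 ≤ f x) (hfg : ∀ x, f x ≤ g x)
    (hg : 0 < ∫ x, g x ∂μ) :
    (∫ x, f x ∂μ) / ∫ x, g x ∂μ ∈ Set.Icc 0 1 := by
  have hgi : Integrable g μ := .of_integral_ne_zero hg.ne'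
  have hfi : Integrable f μ :=
    hgi.mono' hf (ae_of_all _ fun x ↦ (Real.norm_of_nonneg (hf0 x)).trans_le (hfg x))
  exact ⟨div_nonneg (integral_nonneg hf0) hg.le,
    (div_le_one hg).2 (integral_mono hfi hgi hfg)⟩

lemma cConst_pos {p : ℕ} {α : ℝ} (hα : 0 < α) (hα2 : α < 2) : 0 < cConst p α := by
  have := Real.Gamma_pos_of_pos (show 0 < 1 - α / 2 by linarith)
  have := Real.Gamma_pos_of_pos (show 0 < (α + p) / 2 by positivity)
  unfold cConst
  positivity

lemma rhoWeight_nonneg {p : ℕ} {α : ℝ} (hα : 0 < α) (hα2 : α < 2)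
    (t : EuclideanSpace ℝ (Fin p)) :
    0 ≤ rhoWeight p α t :=
  mul_nonneg (inv_nonneg.2 (cConst_pos hα hα2).le) (by positivity)

lemma measurable_rhoWeight (p : ℕ) (α : ℝ) : Measurable (rhoWeight p α) := by
  unfold rhoWeight; fun_prop

theorem stmt9_general {Ω : Type*} [MeasureSpace Ω] [IsProbabilityMeasure (ℙ : Measure Ω)]
    {p : ℕ} (X Y : Ω → EuclideanSpace ℝ (Fin p))
    (hX : Measurable X) (hY : Measurable Y)
    {α : ℝ} (hα : 0 < α) (hα2 : α < 2)
    (hpos : 0 < ∫ t : EuclideanSpace ℝ (Fin p),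
        (1 - ‖∫ ω, Complex.exp (Complex.I * ((inner ℝ t (X ω) : ℝ) : ℂ))‖ ^ 2) *
          (1 - ‖∫ ω, Complex.exp (Complex.I * ((inner ℝ t (Y ω) : ℝ) : ℂ))‖ ^ 2) *
          rhoWeight p α t) :
    0 ≤ (∫ t : EuclideanSpace ℝ (Fin p),
          ‖
              ((∫ ω, Complex.exp (Complex.I *
                  (((inner ℝ t (X ω) : ℝ) + (inner ℝ t (Y ω) : ℝ) : ℝ) : ℂ))) -
                (∫ ω, Complex.exp (Complex.I * ((inner ℝ t (X ω) : ℝ) : ℂ))) *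
                  (∫ ω, Complex.exp (Complex.I * ((inner ℝ t (Y ω) : ℝ) : ℂ))))‖ ^ 2 *
            rhoWeight p α t) /
        (∫ t : EuclideanSpace ℝ (Fin p),
          (1 - ‖∫ ω, Complex.exp (Complex.I * ((inner ℝ t (X ω) : ℝ) : ℂ))‖ ^ 2) *
            (1 - ‖∫ ω, Complex.exp (Complex.I * ((inner ℝ t (Y ω) : ℝ) : ℂ))‖ ^ 2) *
            rhoWeight p α t) ∧
      (∫ t : EuclideanSpace ℝ (Fin p),
          ‖
              ((∫ ω, Complex.exp (Complex.I *
                  (((inner ℝ t (X ω) : ℝ) + (inner ℝ t (Y ω) : ℝ) : ℝ) : ℂ))) -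
                (∫ ω, Complex.exp (Complex.I * ((inner ℝ t (X ω) : ℝ) : ℂ))) *
                  (∫ ω, Complex.exp (Complex.I * ((inner ℝ t (Y ω) : ℝ) : ℂ))))‖ ^ 2 *
            rhoWeight p α t) /
        (∫ t : EuclideanSpace ℝ (Fin p),
          (1 - ‖∫ ω, Complex.exp (Complex.I * ((inner ℝ t (X ω) : ℝ) : ℂ))‖ ^ 2) *
            (1 - ‖∫ ω, Complex.exp (Complex.I * ((inner ℝ t (Y ω) : ℝ) : ℂ))‖ ^ 2) *
            rhoWeight p α t) ≤ 1 := by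
  have hφX := continuous_integral_exp_I_mul_inner (μ := ℙ) hX.aemeasurable
  have hφY := continuous_integral_exp_I_mul_inner (μ := ℙ) hY.aemeasurable
  have hφXY : Continuous fun t : EuclideanSpace ℝ (Fin p) ↦ ∫ ω, Complex.exp (Complex.I *
      (((inner ℝ t (X ω) : ℝ) + (inner ℝ t (Y ω) : ℝ) : ℝ) : ℂ)) := by
    simpa only [← inner_add_right, Pi.add_apply] using
      continuous_integral_exp_I_mul_inner (μ := ℙ) (hX.add hY).aemeasurable
  refine integral_div_integral_mem_Icc ?_
    (fun t ↦ mul_nonneg (sq_nonneg _) (rhoWeight_nonneg hα hα2 t))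
    (fun t ↦ mul_le_mul_of_nonneg_right ?_ (rhoWeight_nonneg hα hα2 t)) hpos
  · exact (((hφXY.sub (hφX.mul hφY)).norm.pow 2).measurable.mul
      (measurable_rhoWeight p α)).aestronglyMeasurable
  · exact sq_norm_integral_exp_add_sub_le (U := fun ω ↦ inner ℝ t (X ω))
      (V := fun ω ↦ inner ℝ t (Y ω)) (by fun_prop) (by fun_prop)

theorem stmt9 {Ω : Type*} [MeasureSpace Ω] [IsProbabilityMeasure (ℙ : Measure Ω)]
    {p : ℕ} (X Y : Ω → EuclideanSpace ℝ (Fin p))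
    (hX : Measurable X) (hY : Measurable Y)
    {α : ℝ} (hα : 0 < α) (hα2 : α < 2)
    (hmomX : Integrable (fun ω => ‖X ω‖ ^ α) (ℙ : Measure Ω))
    (hmomY : Integrable (fun ω => ‖Y ω‖ ^ α) (ℙ : Measure Ω))
    (hpos : 0 < ∫ t : EuclideanSpace ℝ (Fin p),
        (1 - ‖∫ ω, Complex.exp (Complex.I * ((inner ℝ t (X ω) : ℝ) : ℂ))‖ ^ 2) *
          (1 - ‖∫ ω, Complex.exp (Complex.I * ((inner ℝ t (Y ω) : ℝ) : ℂ))‖ ^ 2) *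
          rhoWeight p α t) :
    0 ≤ (∫ t : EuclideanSpace ℝ (Fin p),
          ‖
              ((∫ ω, Complex.exp (Complex.I *
                  (((inner ℝ t (X ω) : ℝ) + (inner ℝ t (Y ω) : ℝ) : ℝ) : ℂ))) -
                (∫ ω, Complex.exp (Complex.I * ((inner ℝ t (X ω) : ℝ) : ℂ))) *
                  (∫ ω, Complex.exp (Complex.I * ((inner ℝ t (Y ω) : ℝ) : ℂ))))‖ ^ 2 *
            rhoWeight p α t) /
        (∫ t : EuclideanSpace ℝ (Fin p),
          (1 - ‖∫ ω, Complex.exp (Complex.I * ((inner ℝ t (X ω) : ℝ) : ℂ))‖ ^ 2) *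
            (1 - ‖∫ ω, Complex.exp (Complex.I * ((inner ℝ t (Y ω) : ℝ) : ℂ))‖ ^ 2) *
            rhoWeight p α t) ∧
      (∫ t : EuclideanSpace ℝ (Fin p),
          ‖
              ((∫ ω, Complex.exp (Complex.I *
                  (((inner ℝ t (X ω) : ℝ) + (inner ℝ t (Y ω) : ℝ) : ℝ) : ℂ))) -
                (∫ ω, Complex.exp (Complex.I * ((inner ℝ t (X ω) : ℝ) : ℂ))) *
                  (∫ ω, Complex.exp (Complex.I * ((inner ℝ t (Y ω) : ℝ) : ℂ))))‖ ^ 2 *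
            rhoWeight p α t) /
        (∫ t : EuclideanSpace ℝ (Fin p),
          (1 - ‖∫ ω, Complex.exp (Complex.I * ((inner ℝ t (X ω) : ℝ) : ℂ))‖ ^ 2) *
            (1 - ‖∫ ω, Complex.exp (Complex.I * ((inner ℝ t (Y ω) : ℝ) : ℂ))‖ ^ 2) *
            rhoWeight p α t) ≤ 1 :=
  stmt9_general X Y hX hY hα hα2 hpos
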